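/- Eckart–Young in Frobenius norm: for A ∈ ℝ^{m×n} with singular value decomposition A = U Σ Vᵀ and any k ≤ min(m,n), the truncated SVD A_k = U_k Σ_k V_kᵀ satisfies ‖A − A_k‖_F ≤ ‖A − B‖_F for every matrix B ∈ ℝ^{m×n} of rank at most k. -/

import Mathlib

open Matrix

/-- Squared Frobenius norm. -/
def frobSq {m n : Type*} [Fintype m] [Fintype n] (A : Matrix m n ℝ) : ℝ :=
  ∑ i, ∑ j, (A i j) ^ 2

lemma frobSq_eq_trace {m n : Type*} [Fintype m] [Fintype n] (X : Matrix m n ℝ) :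
    frobSq X = (Xᵀ * X).trace := by
  unfold frobSq
  simp only [Matrix.trace, Matrix.diag, Matrix.mul_apply, Matrix.transpose_apply]
  rw [Finset.sum_comm]
  exact Finset.sum_congr rfl fun j _ => Finset.sum_congr rfl fun i _ => by ring

lemma frobSq_conj {m n : ℕ} (U : Matrix (Fin m) (Fin m) ℝ) (V : Matrix (Fin n) (Fin n) ℝ)
    (hU : Uᵀ * U = 1) (hV : Vᵀ * V = 1) (X : Matrix (Fin m) (Fin n) ℝ) :
    frobSq (U * X * Vᵀ) = frobSq X := by
  rw [frobSq_eq_trace, frobSq_eq_trace]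
  have h : (U * X * Vᵀ)ᵀ * (U * X * Vᵀ) = V * (Xᵀ * X) * Vᵀ := by
    simp only [Matrix.transpose_mul, Matrix.transpose_transpose]
    calc V * (Xᵀ * Uᵀ) * (U * X * Vᵀ) = V * (Xᵀ * ((Uᵀ * U) * (X * Vᵀ))) := by
          simp only [Matrix.mul_assoc]
      _ = V * (Xᵀ * X) * Vᵀ := by rw [hU]; simp only [Matrix.one_mul, Matrix.mul_assoc]
  rw [h, Matrix.trace_mul_cycle, ← Matrix.mul_assoc, hV, Matrix.one_mul]
open Matrix

set_option maxHeartbeats 1000000 in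
lemma exists_orthonormal_span {m n k : ℕ} (C : Matrix (Fin m) (Fin n) ℝ) (hC : C.rank ≤ k) :
    ∃ (r : ℕ) (v : Fin r → (Fin m → ℝ)) (γ : Fin r → Fin n → ℝ),
      r ≤ k ∧
      (∀ l l', ∑ i, v l i * v l' i = if l = l' then 1 else 0) ∧
      (∀ i j, C i j = ∑ l, γ l j * v l i) := by
  classical
  let c : Fin n → EuclideanSpace ℝ (Fin m) := fun j => (WithLp.equiv 2 (Fin m → ℝ)).symm (Cᵀ j)
  let W : Submodule ℝ (EuclideanSpace ℝ (Fin m)) := Submodule.span ℝ (Set.range c)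
  have hfr : Module.finrank ℝ W = C.rank := by
    rw [Matrix.rank_eq_finrank_span_cols]
    have hmap : W.map ((WithLp.linearEquiv 2 ℝ (Fin m → ℝ) : EuclideanSpace ℝ (Fin m) ≃ₗ[ℝ] (Fin m → ℝ)) : EuclideanSpace ℝ (Fin m) →ₗ[ℝ] (Fin m → ℝ)) =
        Submodule.span ℝ (Set.range Cᵀ) := by
      rw [Submodule.map_span]
      congr 1
      rw [← Set.range_comp]
      rfl
    rw [← (show Submodule.span ℝ (Set.range Cᵀ) = Submodule.span ℝ (Set.range C.col) from rfl), ← hmap]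
    exact (LinearEquiv.finrank_map_eq (WithLp.linearEquiv 2 ℝ (Fin m → ℝ)) W).symm
  let b := stdOrthonormalBasis ℝ W
  have hmem : ∀ j, c j ∈ W := fun j => Submodule.subset_span (Set.mem_range_self j)
  refine ⟨Module.finrank ℝ W, fun l i => ((b l : EuclideanSpace ℝ (Fin m)) : Fin m → ℝ) i,
    fun l j => b.repr ⟨c j, hmem j⟩ l, hfr ▸ hC, ?_, ?_⟩
  · intro l l'
    have h2 := (orthonormal_iff_ite.mp b.orthonormal) l l'
    rw [Submodule.coe_inner, PiLp.inner_apply] at h2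
    simpa only [RCLike.inner_apply, conj_trivial, mul_comm] using h2
  · intro i j
    have h1 : ((∑ l, b.repr ⟨c j, hmem j⟩ l • b l : W) : EuclideanSpace ℝ (Fin m)) = c j := by
      rw [b.sum_repr ⟨c j, hmem j⟩]
    have h3 : ((∑ l, b.repr ⟨c j, hmem j⟩ l • b l : W) : EuclideanSpace ℝ (Fin m))
        = ∑ l, b.repr ⟨c j, hmem j⟩ l • ((b l : EuclideanSpace ℝ (Fin m))) := by
      rw [← W.subtype_apply, map_sum]
      rfl
    rw [h3] at h1
    have h4 := congrArg (fun x : EuclideanSpace ℝ (Fin m) => x i) h1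
    have h5 : (∑ l, b.repr ⟨c j, hmem j⟩ l • ((b l : EuclideanSpace ℝ (Fin m)))) i
        = ∑ l, b.repr ⟨c j, hmem j⟩ l * ((b l : EuclideanSpace ℝ (Fin m)) i) := by
      simp [WithLp.ofLp_sum]
    rw [h5] at h4
    exact h4.symm

lemma fin_sum_ite {m : ℕ} (jv : ℕ) (f : Fin m → ℝ) :
    ∑ i : Fin m, (if (i : ℕ) = jv then f i else 0)
      = if h : jv < m then f ⟨jv, h⟩ else 0 := by
  split_ifs with h
  · rw [Finset.sum_eq_single (⟨jv, h⟩ : Fin m)]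
    · simp
    · intro i _ hne
      rw [if_neg]
      exact fun hc => hne (Fin.ext hc)
    · intro hc; exact absurd (Finset.mem_univ _) hc
  · apply Finset.sum_eq_zero
    intro i _
    rw [if_neg]
    omega

lemma expand_sq {m r : ℕ} (v : Fin r → (Fin m → ℝ))
    (hv : ∀ l l', ∑ i, v l i * v l' i = if l = l' then 1 else 0)
    (x : Fin m → ℝ) (γ : Fin r → ℝ) :
    ∑ i, (x i - ∑ l, γ l * v l i)^2
      = ∑ i, (x i)^2 - 2 * ∑ l, (γ l * (∑ i, x i * v l i)) + ∑ l, (γ l)^2 := by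
  classical
  have hB : ∑ i, (x i * ∑ l, γ l * v l i) = ∑ l, (γ l * (∑ i, x i * v l i)) := by
    calc ∑ i, (x i * ∑ l, γ l * v l i) = ∑ i, ∑ l, x i * (γ l * v l i) := by
          exact Finset.sum_congr rfl fun i _ => Finset.mul_sum _ _ _
      _ = ∑ l, ∑ i, x i * (γ l * v l i) := Finset.sum_comm
      _ = ∑ l, (γ l * (∑ i, x i * v l i)) := by
          refine Finset.sum_congr rfl fun l _ => ?_
          rw [Finset.mul_sum]
          exact Finset.sum_congr rfl fun i _ => by ring
  have hC : ∑ i, (∑ l, γ l * v l i)^2 = ∑ l, (γ l)^2 := by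
    calc ∑ i, (∑ l, γ l * v l i)^2
        = ∑ i, ∑ l, ∑ l', (γ l * v l i) * (γ l' * v l' i) := by
          refine Finset.sum_congr rfl fun i _ => ?_
          rw [sq, Finset.sum_mul_sum]
      _ = ∑ l, ∑ l', (γ l * γ l') * ∑ i, v l i * v l' i := by
          rw [Finset.sum_comm]
          refine Finset.sum_congr rfl fun l _ => ?_
          rw [Finset.sum_comm]
          refine Finset.sum_congr rfl fun l' _ => ?_
          rw [Finset.mul_sum]
          exact Finset.sum_congr rfl fun i _ => by ring
      _ = ∑ l, (γ l)^2 := by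
          refine Finset.sum_congr rfl fun l _ => ?_
          rw [Finset.sum_eq_single l]
          · rw [hv l l, if_pos rfl]; ring
          · intro l' _ hne; rw [hv l l', if_neg (Ne.symm hne)]; ring
          · intro h; exact absurd (Finset.mem_univ l) h
  calc ∑ i, (x i - ∑ l, γ l * v l i)^2
      = ∑ i, ((x i)^2 - 2 * (x i * ∑ l, γ l * v l i) + (∑ l, γ l * v l i)^2) :=
        Finset.sum_congr rfl fun i _ => by ring
    _ = _ := by
        rw [Finset.sum_add_distrib, Finset.sum_sub_distrib, hC, ← Finset.mul_sum, hB]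

lemma approx_lb {m r : ℕ} (v : Fin r → (Fin m → ℝ))
    (hv : ∀ l l', ∑ i, v l i * v l' i = if l = l' then 1 else 0)
    (x : Fin m → ℝ) (γ : Fin r → ℝ) :
    ∑ i, (x i)^2 - ∑ l, (∑ i, x i * v l i)^2 ≤ ∑ i, (x i - ∑ l, γ l * v l i)^2 := by
  have expand := expand_sq v hv x γ
  set t : Fin r → ℝ := fun l => ∑ i, x i * v l i with ht
  have hsq : (0:ℝ) ≤ ∑ l, (γ l - t l)^2 :=
    Finset.sum_nonneg fun l _ => sq_nonneg _
  have hexp2 : ∑ l, (γ l - t l)^2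
      = ∑ l, (γ l)^2 - 2 * ∑ l, (γ l * t l) + ∑ l, (t l)^2 := by
    calc ∑ l, (γ l - t l)^2 = ∑ l, ((γ l)^2 - 2 * (γ l * t l) + (t l)^2) :=
          Finset.sum_congr rfl fun l _ => by ring
      _ = _ := by rw [Finset.sum_add_distrib, Finset.sum_sub_distrib, ← Finset.mul_sum]
  rw [expand]
  linarith

lemma bessel {m r : ℕ} (v : Fin r → (Fin m → ℝ))
    (hv : ∀ l l', ∑ i, v l i * v l' i = if l = l' then 1 else 0)
    (x : Fin m → ℝ) :
    ∑ l, (∑ i, x i * v l i)^2 ≤ ∑ i, (x i)^2 := by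
  have expand := expand_sq v hv x (fun l => ∑ i, x i * v l i)
  have hsq : (0:ℝ) ≤ ∑ i, (x i - ∑ l, (∑ i, x i * v l i) * v l i)^2 :=
    Finset.sum_nonneg fun i _ => sq_nonneg _
  have h1 : ∑ l, ((∑ i, x i * v l i) * (∑ i, x i * v l i)) = ∑ l, (∑ i, x i * v l i)^2 :=
    Finset.sum_congr rfl fun l _ => (sq _).symm
  rw [expand, h1] at hsq
  linarith

lemma frobSq_cols {m n : ℕ} (X : Matrix (Fin m) (Fin n) ℝ) :
    frobSq X = ∑ j, ∑ i, (X i j)^2 := Finset.sum_comm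

lemma core_diag {m n k : ℕ} (hk : k ≤ min m n) (σ : ℕ → ℝ)
    (hσ0 : ∀ i, 0 ≤ σ i) (hσmono : ∀ i j : ℕ, i ≤ j → σ j ≤ σ i)
    (S Sk : Matrix (Fin m) (Fin n) ℝ)
    (hS : ∀ i j, S i j = if (i : ℕ) = (j : ℕ) then σ i else 0)
    (hSk : ∀ i j, Sk i j = if (i : ℕ) = (j : ℕ) ∧ (i : ℕ) < k then σ i else 0)
    (C : Matrix (Fin m) (Fin n) ℝ) (hC : C.rank ≤ k) :
    frobSq (S - Sk) ≤ frobSq (S - C) := by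
  classical
  have km : k ≤ m := le_trans hk (min_le_left _ _)
  have kn : k ≤ n := le_trans hk (min_le_right _ _)
  obtain ⟨r, v, γ, hrk, hv, hCv⟩ := exists_orthonormal_span C hC
  set w : Fin r → Fin n → ℝ :=
    fun l j => if h : (j : ℕ) < m then v l ⟨(j : ℕ), h⟩ else 0 with hw
  set σ' : Fin n → ℝ := fun j => if (j : ℕ) < m then σ (j : ℕ) else 0 with hσ'
  set p : Fin n → ℝ := fun j => ∑ l, (w l j)^2 with hp
  -- column facts
  have colS_sq : ∀ j : Fin n, ∑ i, (S i j)^2 = (σ' j)^2 := by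
    intro j
    have h1 : ∀ i : Fin m, (S i j)^2 = if (i : ℕ) = (j : ℕ) then (σ (i : ℕ))^2 else 0 := by
      intro i; rw [hS]; split_ifs <;> ring
    rw [Finset.sum_congr rfl fun i _ => h1 i, fin_sum_ite]
    simp only [hσ']
    split_ifs with h <;> simp
  have colS_dot : ∀ (j : Fin n) (l : Fin r), ∑ i, (S i j) * v l i = σ' j * w l j := by
    intro j l
    have h1 : ∀ i : Fin m, (S i j) * v l i
        = if (i : ℕ) = (j : ℕ) then σ (i : ℕ) * v l i else 0 := by
      intro i; rw [hS]; split_ifs <;> ring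
    rw [Finset.sum_congr rfl fun i _ => h1 i, fin_sum_ite]
    simp only [hσ', hw]
    split_ifs with h <;> simp
  -- per column lower bound
  have colbound : ∀ j : Fin n,
      (σ' j)^2 - (σ' j)^2 * p j ≤ ∑ i, ((S - C) i j)^2 := by
    intro j
    have h := approx_lb v hv (fun i => S i j) (fun l => γ l j)
    have hL : ∑ l, (∑ i, S i j * v l i)^2 = (σ' j)^2 * p j := by
      rw [Finset.sum_congr rfl fun l _ => by rw [colS_dot j l], hp, Finset.mul_sum]
      exact Finset.sum_congr rfl fun l _ => by ring
    have hR : ∀ i, (fun i => S i j) i - ∑ l, γ l j * v l i = (S - C) i j := by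
      intro i
      simp only [Matrix.sub_apply]
      rw [hCv i j]
    rw [colS_sq j, hL] at h
    calc (σ' j)^2 - (σ' j)^2 * p j ≤ ∑ i, ((fun i => S i j) i - ∑ l, γ l j * v l i)^2 := h
      _ = ∑ i, ((S - C) i j)^2 := Finset.sum_congr rfl fun i _ => by rw [hR i]
  -- bounds on p
  have hp0 : ∀ j, 0 ≤ p j := fun j => Finset.sum_nonneg fun l _ => sq_nonneg _
  have hp1 : ∀ j, p j ≤ 1 := by
    intro j
    rw [hp]
    by_cases h : (j : ℕ) < m
    · have hb := bessel v hv (fun i => if i = (⟨(j:ℕ), h⟩ : Fin m) then 1 else 0)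
      have hx2 : ∑ i : Fin m, ((if i = (⟨(j:ℕ), h⟩ : Fin m) then (1:ℝ) else 0))^2 = 1 := by
        simp
      have hxv : ∀ l, ∑ i : Fin m, (if i = (⟨(j:ℕ), h⟩ : Fin m) then (1:ℝ) else 0) * v l i
          = w l j := by
        intro l
        rw [hw]
        simp [h]
      rw [hx2] at hb
      calc ∑ l, (w l j)^2 = ∑ l, (∑ i : Fin m,
            (if i = (⟨(j:ℕ), h⟩ : Fin m) then (1:ℝ) else 0) * v l i)^2 :=
            Finset.sum_congr rfl fun l _ => by rw [hxv l]
        _ ≤ 1 := hb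
    · have : ∀ l, w l j = 0 := by intro l; rw [hw]; simp [h]
      simp [this]
  have hpsum : ∑ j, p j ≤ (k : ℝ) := by
    have h1 : ∑ j, p j = ∑ l, ∑ j : Fin n, (w l j)^2 := by
      rw [hp]; exact Finset.sum_comm
    have h2 : ∀ l, ∑ j : Fin n, (w l j)^2 ≤ 1 := by
      intro l
      have h3 : ∀ j : Fin n, (w l j)^2
          = ∑ i : Fin m, (if (i : ℕ) = (j : ℕ) then (v l i)^2 else 0) := by
        intro j
        rw [fin_sum_ite ((j : ℕ)) (fun i => (v l i)^2)]
        simp only [hw]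
        split_ifs with h <;> simp
      calc ∑ j : Fin n, (w l j)^2
          = ∑ i : Fin m, ∑ j : Fin n, (if (i : ℕ) = (j : ℕ) then (v l i)^2 else 0) := by
            rw [Finset.sum_congr rfl fun j _ => h3 j]; exact Finset.sum_comm
        _ ≤ ∑ i : Fin m, (v l i)^2 := by
            refine Finset.sum_le_sum fun i _ => ?_
            have h4 : ∀ j : Fin n, (if (i : ℕ) = (j : ℕ) then (v l i)^2 else 0)
                = (if (j : ℕ) = (i : ℕ) then (v l i)^2 else 0) :=
              fun j => if_congr eq_comm rfl rfl
            rw [Finset.sum_congr rfl fun j _ => h4 j,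
              fin_sum_ite ((i : ℕ)) (fun _ => (v l i)^2)]
            split_ifs with h5
            · exact le_rfl
            · exact sq_nonneg _
        _ = ∑ i : Fin m, v l i * v l i := Finset.sum_congr rfl fun i _ => sq (v l i)
        _ = 1 := by rw [hv l l, if_pos rfl]
    calc ∑ j, p j ≤ ∑ l : Fin r, (1:ℝ) := by rw [h1]; exact Finset.sum_le_sum fun l _ => h2 l
      _ = (r : ℝ) := by simp
      _ ≤ (k : ℝ) := Nat.cast_le.mpr hrk
  -- counting
  have hcard : ∑ j : Fin n, (if (j : ℕ) < k then (1:ℝ) else 0) = (k : ℝ) := by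
    rw [Fin.sum_univ_eq_sum_range (fun j => if j < k then (1:ℝ) else 0) n]
    rw [← Finset.sum_filter]
    have : (Finset.range n).filter (fun j => j < k) = Finset.range k := by
      ext j; simp only [Finset.mem_filter, Finset.mem_range]; omega
    rw [this]
    simp
  -- value of frobSq (S - Sk)
  set q : Fin n → ℝ := fun j => if (j : ℕ) < k then (σ (j : ℕ))^2 else 0 with hq
  have hSSk : frobSq (S - Sk) = ∑ j, ((σ' j)^2 - q j) := by
    rw [frobSq_cols]
    refine Finset.sum_congr rfl fun j _ => ?_
    have h1 : ∀ i : Fin m, ((S - Sk) i j)^2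
        = if (i : ℕ) = (j : ℕ) then (if (i : ℕ) < k then 0 else (σ (i:ℕ))^2) else 0 := by
      intro i
      simp only [Matrix.sub_apply]
      rw [hS, hSk]
      split_ifs <;> first | ring1 | (exfalso; omega)
    rw [Finset.sum_congr rfl fun i _ => h1 i, fin_sum_ite]
    simp only [hσ', hq]
    by_cases hjm : (j : ℕ) < m
    · rw [dif_pos hjm, if_pos hjm]
      by_cases hjk : (j : ℕ) < k
      · rw [if_pos hjk, if_pos hjk]; ring
      · rw [if_neg hjk, if_neg hjk]; ring
    · have hjk : ¬ (j : ℕ) < k := by omega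
      rw [dif_neg hjm, if_neg hjm, if_neg hjk]; ring
  -- final chain
  have hfc : ∑ j, ((σ' j)^2 - (σ' j)^2 * p j) ≤ frobSq (S - C) := by
    rw [frobSq_cols]
    exact Finset.sum_le_sum fun j _ => colbound j
  have hptw : ∀ j : Fin n, (σ' j)^2 * p j - q j
      ≤ (σ k)^2 * p j - (σ k)^2 * (if (j : ℕ) < k then (1:ℝ) else 0) := by
    intro j
    simp only [hσ', hq]
    by_cases hjk : (j : ℕ) < k
    · have hjm : (j : ℕ) < m := lt_of_lt_of_le hjk km
      rw [if_pos hjm, if_pos hjk, if_pos hjk]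
      have h1 : σ k ≤ σ (j : ℕ) := hσmono _ _ (le_of_lt hjk)
      have h2 : 0 ≤ σ k := hσ0 k
      have h3 : (σ k)^2 ≤ (σ (j:ℕ))^2 := by nlinarith
      nlinarith [hp1 j, hp0 j]
    · rw [if_neg hjk, if_neg hjk]
      split_ifs with hjm
      · have h1 : σ (j:ℕ) ≤ σ k := hσmono _ _ (le_of_not_gt hjk)
        have h2 : 0 ≤ σ (j:ℕ) := hσ0 _
        have h3 : σ (j:ℕ)^2 ≤ (σ k)^2 := by nlinarith
        have h4 := mul_le_mul_of_nonneg_right h3 (hp0 j)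
        linarith
      · have h4 : 0 ≤ (σ k)^2 * p j := mul_nonneg (sq_nonneg _) (hp0 j)
        linarith
  have hsum2 : ∑ j, ((σ' j)^2 * p j - q j)
      ≤ (σ k)^2 * (∑ j, p j) - (σ k)^2 * (k : ℝ) := by
    calc ∑ j, ((σ' j)^2 * p j - q j)
        ≤ ∑ j, ((σ k)^2 * p j - (σ k)^2 * (if (j : ℕ) < k then (1:ℝ) else 0)) :=
          Finset.sum_le_sum fun j _ => hptw j
      _ = (σ k)^2 * (∑ j, p j) - (σ k)^2 * (k : ℝ) := by
          rw [Finset.sum_sub_distrib, ← Finset.mul_sum, ← Finset.mul_sum, hcard]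
  have hAQ : ∑ j, ((σ' j)^2 * p j) - ∑ j, q j ≤ 0 := by
    rw [← Finset.sum_sub_distrib]
    have h5 : (σ k)^2 * (∑ j, p j) - (σ k)^2 * (k : ℝ) ≤ 0 := by
      have := sq_nonneg (σ k)
      nlinarith [hpsum]
    linarith
  rw [hSSk, Finset.sum_sub_distrib]
  have hfc2 : ∑ j, (σ' j)^2 - ∑ j, ((σ' j)^2 * p j) ≤ frobSq (S - C) := by
    rw [← Finset.sum_sub_distrib]
    exact hfc
  linarith

/-- Eckart–Young in the Frobenius norm: if `A = U Σ Vᵀ` is a singular value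
decomposition (with orthogonal `U`, `V` and nonincreasing nonnegative diagonal `Σ`)
and `A_k = U Σ_k Vᵀ` is the rank-`k` truncation, then `‖A − A_k‖_F ≤ ‖A − B‖_F`
for every `B` of rank at most `k`. -/
theorem eckart_young_frobenius {m n k : ℕ} (hk : k ≤ min m n)
    (A : Matrix (Fin m) (Fin n) ℝ)
    (U : Matrix (Fin m) (Fin m) ℝ) (V : Matrix (Fin n) (Fin n) ℝ)
    (σ : ℕ → ℝ)
    (hU : Uᵀ * U = 1) (hV : Vᵀ * V = 1)
    (hσ0 : ∀ i, 0 ≤ σ i)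
    (hσmono : ∀ i j : ℕ, i ≤ j → σ j ≤ σ i)
    (S Sk : Matrix (Fin m) (Fin n) ℝ)
    (hS : ∀ i j, S i j = if (i : ℕ) = (j : ℕ) then σ i else 0)
    (hSk : ∀ i j, Sk i j = if (i : ℕ) = (j : ℕ) ∧ (i : ℕ) < k then σ i else 0)
    (hA : A = U * S * Vᵀ) :
    ∀ B : Matrix (Fin m) (Fin n) ℝ, B.rank ≤ k →
      Real.sqrt (frobSq (A - U * Sk * Vᵀ)) ≤ Real.sqrt (frobSq (A - B)) := by
  intro B hB
  have hUU : U * Uᵀ = 1 := mul_eq_one_comm.mp hU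
  have hVV : V * Vᵀ = 1 := mul_eq_one_comm.mp hV
  have hCr : (Uᵀ * B * V).rank ≤ k := by
    calc (Uᵀ * B * V).rank ≤ (Uᵀ * B).rank := Matrix.rank_mul_le_left _ _
      _ ≤ B.rank := Matrix.rank_mul_le_right _ _
      _ ≤ k := hB
  have h1 : A - U * Sk * Vᵀ = U * (S - Sk) * Vᵀ := by
    rw [hA, Matrix.mul_sub, Matrix.sub_mul]
  have h2 : A - B = U * (S - (Uᵀ * B * V)) * Vᵀ := by
    rw [hA, Matrix.mul_sub, Matrix.sub_mul]
    have h3 : U * (Uᵀ * B * V) * Vᵀ = (U * Uᵀ) * B * (V * Vᵀ) := by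
      simp only [Matrix.mul_assoc]
    rw [h3, hUU, hVV, Matrix.one_mul, Matrix.mul_one]
  rw [h1, h2, frobSq_conj U V hU hV, frobSq_conj U V hU hV]
  exact Real.sqrt_le_sqrt (core_diag hk σ hσ0 hσmono S Sk hS hSk (Uᵀ * B * V) hCr)
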